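/- arXiv:2011.02106 — 5 statements merged into one kernel-verified Lean document; each statement's English description precedes it below -/
import Mathlib

section
/- Let N ≥ 2, α ∈ (1,2), γ = 1 + α/2, ν = γ - α = 1 - α/2, and define the coefficients g_0 = ∑_{ℓ=1}^{N-1}((ℓ+1)^ν - (ℓ-1)^ν)/ℓ^γ + (N^ν - (N-1)^ν)/N^γ + 2ν/(αN^α) and g_k = -((k+1)^ν - (k-1)^ν)/(2k^γ) for k = 1,…,N-2. Then g_0 > 0, g_k < 0 for k ≥ 1, and g_0 > 2∑_{k=1}^{N-2}|g_k|, i.e., the symmetric Toeplitz matrix with diagonal g_0 and off-diagonals g_{|i-j|} is strictly diagonally dominant with positive diagonal. -/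
/-! Every coefficient is built from the positive weights
`w ℓ = ((ℓ + 1)^ν - (ℓ - 1)^ν) / ℓ^γ` (positive because `ν > 0`), with `g k = -w k / 2`.
Hence `2 ∑_{k=1}^{N-2} |g k| = ∑_{ℓ=1}^{N-2} w ℓ`, and `g 0` exceeds it by the three positive
terms `w (N - 1)`, `(N^ν - (N-1)^ν) / N^γ` and `2ν / (α N^α)`. -/

open Finset

lemma Real.rpow_sub_rpow_pos {a b ν : ℝ} (hν : 0 < ν) (ha : 0 ≤ a) (hab : a < b) :
    0 < b ^ ν - a ^ ν :=
  sub_pos.2 (Real.rpow_lt_rpow ha hab hν)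

lemma Real.rpow_add_one_sub_rpow_sub_one_div_rpow_pos {ν x : ℝ} (hν : 0 < ν) (γ : ℝ)
    (hx : 1 ≤ x) : 0 < ((x + 1) ^ ν - (x - 1) ^ ν) / x ^ γ :=
  div_pos (Real.rpow_sub_rpow_pos hν (by linarith) (by linarith))
    (Real.rpow_pos_of_pos (by linarith) γ)

theorem frac_laplacian_coeffs_diag_dominant
    (N : ℕ) (hN : 2 ≤ N) (α : ℝ) (hα : 1 < α) (hα2 : α < 2)
    (γ ν : ℝ) (hγ : γ = 1 + α / 2) (hν : ν = γ - α)
    (g : ℕ → ℝ)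
    (hg0 : g 0 = (∑ ℓ ∈ Finset.Icc 1 (N - 1),
        (((ℓ : ℝ) + 1) ^ ν - ((ℓ : ℝ) - 1) ^ ν) / (ℓ : ℝ) ^ γ)
      + ((N : ℝ) ^ ν - ((N : ℝ) - 1) ^ ν) / (N : ℝ) ^ γ
      + 2 * ν / (α * (N : ℝ) ^ α))
    (hgk : ∀ k, 1 ≤ k → k ≤ N - 2 →
      g k = -((((k : ℝ) + 1) ^ ν - ((k : ℝ) - 1) ^ ν) / (2 * (k : ℝ) ^ γ))) :
    0 < g 0 ∧ (∀ k, 1 ≤ k → k ≤ N - 2 → g k < 0) ∧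
      2 * (∑ k ∈ Finset.Icc 1 (N - 2), |g k|) < g 0 := by
  have hν0 : 0 < ν := by linarith
  set w : ℕ → ℝ := fun ℓ ↦ (((ℓ : ℝ) + 1) ^ ν - ((ℓ : ℝ) - 1) ^ ν) / (ℓ : ℝ) ^ γ
  have hw_pos : ∀ ℓ, 1 ≤ ℓ → 0 < w ℓ := fun ℓ hℓ ↦
    Real.rpow_add_one_sub_rpow_sub_one_div_rpow_pos hν0 γ (by exact_mod_cast hℓ)
  have hgk_eq : ∀ k, 1 ≤ k → k ≤ N - 2 → g k = -(w k / 2) := fun k hk hkN ↦ by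
    rw [hgk k hk hkN, div_div, mul_comm]
  have hgk_neg : ∀ k, 1 ≤ k → k ≤ N - 2 → g k < 0 := fun k hk hkN ↦ by
    linarith [hgk_eq k hk hkN, hw_pos k hk]
  have hN1 : (1 : ℝ) ≤ N - 1 := by
    have : (2 : ℝ) ≤ N := by exact_mod_cast hN
    linarith
  have hlast_pos : 0 < ((N : ℝ) ^ ν - ((N : ℝ) - 1) ^ ν) / (N : ℝ) ^ γ :=
    div_pos (Real.rpow_sub_rpow_pos hν0 (by linarith) (by linarith))
      (Real.rpow_pos_of_pos (by linarith) γ)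
  have htail_pos : 0 < 2 * ν / (α * (N : ℝ) ^ α) := by
    have := Real.rpow_pos_of_pos (show (0 : ℝ) < N by linarith) α
    positivity
  have hsum_abs : 2 * ∑ k ∈ Icc 1 (N - 2), |g k| = ∑ k ∈ Icc 1 (N - 2), w k := by
    rw [mul_sum]
    refine sum_congr rfl fun k hk ↦ ?_
    obtain ⟨hk, hkN⟩ := mem_Icc.1 hk
    rw [hgk_eq k hk hkN, abs_neg, abs_of_pos (half_pos (hw_pos k hk))]
    ring
  have hsplit : ∑ ℓ ∈ Icc 1 (N - 1), w ℓ = ∑ ℓ ∈ Icc 1 (N - 2), w ℓ + w (N - 1) := by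
    rw [show N - 1 = N - 2 + 1 by omega, sum_Icc_succ_top (by omega)]
  have hdom : 2 * ∑ k ∈ Icc 1 (N - 2), |g k| < g 0 := by
    rw [hsum_abs, hg0, hsplit]
    linarith [hw_pos (N - 1) (by omega)]
  exact ⟨(mul_nonneg zero_le_two (sum_nonneg fun _ _ ↦ abs_nonneg _)).trans_lt hdom,
    hgk_neg, hdom⟩
end

section
/- Let G be the (N-1)×(N-1) symmetric Toeplitz matrix with entries G_{ij} = -c·g_{i-j}, where c > 0 and the g_k are the fractional Laplacian discretization coefficients with g_{-k} = g_k. Then -G is symmetric positive definite. -/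
/-!
`-G` is the symmetric Toeplitz matrix with symbol `c • g`; in each row the off-diagonal entries are
among `c g_{±1}, …, c g_{±(N-2)}`, each value occurring at most twice. With
`w_ℓ = ((ℓ+1)^ν - (ℓ-1)^ν)/(2ℓ^γ) ≥ 0` we have `|g_k| = w_k` and
`g_0 = 2 ∑_{ℓ=1}^{N-1} w_ℓ + (N^ν - (N-1)^ν)/N^γ + 2ν/(α N^α) > 2 ∑_{k=1}^{N-2} w_k`, so the matrix is
strictly diagonally dominant, and by Gershgorin's theorem its eigenvalues are positive.
-/

open Finset

namespace Matrix

variable {n : Type*} [Fintype n] [DecidableEq n]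

theorem IsHermitian.posDef_of_sum_abs_lt_diag {A : Matrix n n ℝ} (hA : A.IsHermitian)
    (h : ∀ i, ∑ j ∈ univ.erase i, |A i j| < A i i) : A.PosDef := by
  refine hA.posDef_iff_eigenvalues_pos.mpr fun i => ?_
  have hμ : Module.End.HasEigenvalue (toLin' A) (hA.eigenvalues i) := by
    rw [Module.End.hasEigenvalue_iff_mem_spectrum, spectrum_toLin']
    exact hA.eigenvalues_mem_spectrum_real i
  obtain ⟨k, hk⟩ := eigenvalue_mem_ball hμ
  rw [Metric.mem_closedBall, Real.dist_eq] at hk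
  simp only [Real.norm_eq_abs] at hk
  linarith [neg_abs_le (hA.eigenvalues i - A k k), h k]

end Matrix

theorem Fin.sum_erase_natAbs_sub_le {n : ℕ} (f : ℕ → ℝ) (hf : ∀ k, 0 ≤ f k) (i : Fin n) :
    ∑ j ∈ univ.erase i, f ((i : ℤ) - j).natAbs ≤ 2 * ∑ k ∈ Icc 1 (n - 1), f k := by
  have hmaps : ∀ j ∈ univ.erase i, ((i : ℤ) - j).natAbs ∈ Icc 1 (n - 1) := by
    intro j hj
    have := Fin.val_ne_of_ne (ne_of_mem_erase hj)
    simp only [mem_Icc]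
    omega
  rw [← sum_fiberwise_of_maps_to' hmaps, mul_sum]
  refine sum_le_sum fun k _ => ?_
  have hfiber : #{j ∈ univ.erase i | ((i : ℤ) - (j : Fin n)).natAbs = k} ≤ 2 := by
    refine (card_le_card_of_injOn (fun j : Fin n => (j : ℤ)) (t := {(i : ℤ) - k, (i : ℤ) + k})
      ?_ ?_).trans card_le_two
    · intro j hj
      simp only [coe_filter, Set.mem_ofPred_eq] at hj
      simp only [coe_insert, coe_singleton, Set.mem_insert_iff, Set.mem_singleton_iff]
      omega
    · intro a _ b _ hab
      exact Fin.ext (by simpa using hab)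
  rw [Finset.sum_const, nsmul_eq_mul]
  exact mul_le_mul_of_nonneg_right (by exact_mod_cast hfiber) (hf k)

theorem Int.apply_natAbs_of_even {β : Type*} {g : ℤ → β} (hg : ∀ k, g (-k) = g k) (k : ℤ) :
    g k.natAbs = g k := by
  rcases Int.natAbs_eq k with h | h
  · rw [← h]
  · rw [← hg, ← h]

namespace Matrix

theorem posDef_toeplitz_of_two_mul_sum_abs_lt {n : ℕ} (a : ℤ → ℝ) (ha : ∀ k, a (-k) = a k)
    (hdom : 2 * ∑ k ∈ Icc 1 (n - 1), |a k| < a 0) :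
    (of fun i j : Fin n => a ((i : ℤ) - j)).PosDef := by
  refine IsHermitian.posDef_of_sum_abs_lt_diag ?_ fun i => ?_
  · ext i j
    simp [← ha ((i : ℤ) - j)]
  · calc ∑ j ∈ univ.erase i, |a ((i : ℤ) - j)|
        = ∑ j ∈ univ.erase i, |a ((i : ℤ) - j).natAbs| := by
          simp only [Int.apply_natAbs_of_even ha]
      _ ≤ 2 * ∑ k ∈ Icc 1 (n - 1), |a k| :=
          Fin.sum_erase_natAbs_sub_le (fun k => |a k|) (fun _ => abs_nonneg _) i
      _ < a 0 := hdom
      _ = _ := by simp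

end Matrix

/-- The weight `w_k`, equal to `|g_k|` for `1 ≤ k ≤ N - 2`. -/
noncomputable def fracLaplacianWeight (ν γ : ℝ) (k : ℕ) : ℝ :=
  (((k : ℝ) + 1) ^ ν - ((k : ℝ) - 1) ^ ν) / (2 * (k : ℝ) ^ γ)

theorem fracLaplacianWeight_nonneg {ν : ℝ} (hν : 0 ≤ ν) (γ : ℝ) {k : ℕ} (hk : 1 ≤ k) :
    0 ≤ fracLaplacianWeight ν γ k := by
  have hk' : (1 : ℝ) ≤ k := by exact_mod_cast hk
  have hpow : ((k : ℝ) - 1) ^ ν ≤ ((k : ℝ) + 1) ^ ν :=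
    Real.rpow_le_rpow (by linarith) (by linarith) hν
  exact div_nonneg (sub_nonneg.mpr hpow) (by positivity)

theorem two_mul_sum_fracLaplacianWeight_lt {N : ℕ} (hN : 1 ≤ N) {α ν : ℝ} (hα : 0 < α)
    (hν : 0 < ν) (γ : ℝ) :
    2 * ∑ k ∈ Icc 1 (N - 2), fracLaplacianWeight ν γ k <
      (∑ ℓ ∈ Icc 1 (N - 1), (((ℓ : ℝ) + 1) ^ ν - ((ℓ : ℝ) - 1) ^ ν) / (ℓ : ℝ) ^ γ)
        + ((N : ℝ) ^ ν - ((N : ℝ) - 1) ^ ν) / (N : ℝ) ^ γ + 2 * ν / (α * (N : ℝ) ^ α) := by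
  have hN' : (1 : ℝ) ≤ N := by exact_mod_cast hN
  have hsum : ∑ ℓ ∈ Icc 1 (N - 1), (((ℓ : ℝ) + 1) ^ ν - ((ℓ : ℝ) - 1) ^ ν) / (ℓ : ℝ) ^ γ
      = 2 * ∑ ℓ ∈ Icc 1 (N - 1), fracLaplacianWeight ν γ ℓ := by
    rw [mul_sum]
    refine sum_congr rfl fun ℓ _ => ?_
    rw [fracLaplacianWeight, mul_div_assoc', mul_div_mul_left _ _ two_ne_zero]
  have hmono : ∑ k ∈ Icc 1 (N - 2), fracLaplacianWeight ν γ k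
      ≤ ∑ ℓ ∈ Icc 1 (N - 1), fracLaplacianWeight ν γ ℓ :=
    sum_le_sum_of_subset_of_nonneg (Icc_subset_Icc_right (by omega))
      fun k hk _ => fracLaplacianWeight_nonneg hν.le γ (mem_Icc.mp hk).1
  have hboundary : 0 ≤ ((N : ℝ) ^ ν - ((N : ℝ) - 1) ^ ν) / (N : ℝ) ^ γ := by
    have := Real.rpow_le_rpow (by linarith) (by linarith : (N : ℝ) - 1 ≤ N) hν.le
    exact div_nonneg (by linarith) (by positivity)
  have htail : 0 < 2 * ν / (α * (N : ℝ) ^ α) := by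
    have : 0 < (N : ℝ) ^ α := Real.rpow_pos_of_pos (by linarith) α
    positivity
  rw [hsum]
  linarith

open Matrix in
theorem negG_posDef
    (N : ℕ) (hN : 2 ≤ N) (α : ℝ) (hα : 1 < α) (hα2 : α < 2)
    (γ ν : ℝ) (hγ : γ = 1 + α / 2) (hν : ν = γ - α)
    (c : ℝ) (hc : 0 < c)
    (g : ℤ → ℝ)
    (hgsym : ∀ k : ℤ, g (-k) = g k)
    (hg0 : g 0 = (∑ ℓ ∈ Finset.Icc 1 (N - 1),
        (((ℓ : ℝ) + 1) ^ ν - ((ℓ : ℝ) - 1) ^ ν) / (ℓ : ℝ) ^ γ)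
      + ((N : ℝ) ^ ν - ((N : ℝ) - 1) ^ ν) / (N : ℝ) ^ γ
      + 2 * ν / (α * (N : ℝ) ^ α))
    (hgk : ∀ k : ℕ, 1 ≤ k → k ≤ N - 2 →
      g k = -((((k : ℝ) + 1) ^ ν - ((k : ℝ) - 1) ^ ν) / (2 * (k : ℝ) ^ γ)))
    (G : Matrix (Fin (N - 1)) (Fin (N - 1)) ℝ)
    (hG : ∀ i j : Fin (N - 1), G i j = -c * g ((i : ℤ) - (j : ℤ))) :
    (-G).PosDef := by
  have hν0 : 0 < ν := by rw [hν, hγ]; linarith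
  have hnegG : -G = of fun i j : Fin (N - 1) => (c • g) ((i : ℤ) - j) := by
    ext i j
    simp [hG]
  have habs : ∀ k ∈ Icc 1 (N - 2), |g k| = fracLaplacianWeight ν γ k := fun k hk => by
    rw [mem_Icc] at hk
    rw [hgk k hk.1 (by omega), abs_neg, ← fracLaplacianWeight,
      abs_of_nonneg (fracLaplacianWeight_nonneg hν0.le γ hk.1)]
  rw [hnegG]
  refine posDef_toeplitz_of_two_mul_sum_abs_lt _ (fun k => by simp [hgsym]) ?_
  calc 2 * ∑ k ∈ Icc 1 (N - 1 - 1), |(c • g) k|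
      = c * (2 * ∑ k ∈ Icc 1 (N - 2), |g k|) := by
        simp only [Pi.smul_apply, smul_eq_mul, abs_mul, abs_of_pos hc, ← mul_sum, Nat.sub_sub]
        ring
    _ = c * (2 * ∑ k ∈ Icc 1 (N - 2), fracLaplacianWeight ν γ k) := by rw [sum_congr rfl habs]
    _ < c * g 0 := by
        rw [hg0]
        exact mul_lt_mul_of_pos_left
          (two_mul_sum_fracLaplacianWeight_lt (by omega) (by linarith) hν0 γ) hc
    _ = (c • g) 0 := rfl
end

section
/- Let N be even and let sk(G) be the symmetric skew-circulant matrix of size (N-1) whose first column is -c·[g_0, g_1, …, g_{⌊(N-1)/2⌋}, -g_{N-⌊(N-1)/2⌋-2}, …, -g_1]^T, with c > 0 and the fractional Laplacian coefficients g_k. Then every eigenvalue of sk(G) is real and negative. -/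
/-!
The matrix is real and symmetric (its first column is skew-symmetric under `k ↦ N - 1 - k`
precisely because `N - 1` is odd), so its eigenvalues are real. Every row of a skew-circulant
matrix has the same off-diagonal absolute sum `∑_{k ≥ 1} |col k| ≤ 2c ∑_{k ≥ 1} |g k|`, and the
explicit coefficients satisfy `2 ∑_{k ≥ 1} |g k| < g 0`. Hence every Gershgorin disc, centred at
`-c g 0`, lies in the open left half-plane.
-/

open Finset Matrix

namespace Matrix

variable {𝕜 n : Type*} [RCLike 𝕜] [Fintype n] [DecidableEq n]

lemma hasEigenvalue_toLin'_of_mulVec_eq_smul {A : Matrix n n 𝕜} {μ : 𝕜} {v : n → 𝕜}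
    (hv : v ≠ 0) (h : A *ᵥ v = μ • v) : Module.End.HasEigenvalue A.toLin' μ :=
  Module.End.hasEigenvalue_of_hasEigenvector ⟨Module.End.mem_eigenspace_iff.2 h, hv⟩

lemma IsHermitian.im_eq_zero_of_mulVec_eq_smul {A : Matrix n n 𝕜} (hA : A.IsHermitian)
    {μ : 𝕜} {v : n → 𝕜} (hv : v ≠ 0) (h : A *ᵥ v = μ • v) : RCLike.im μ = 0 := by
  have hμ : Module.End.HasEigenvalue A.toEuclideanLin μ :=
    Module.End.hasEigenvalue_of_hasEigenvector (x := WithLp.toLp 2 v)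
      ⟨Module.End.mem_eigenspace_iff.2 (by rw [toLpLin_toLp, toLin'_apply, h]; rfl),
        by simpa using hv⟩
  exact RCLike.conj_eq_iff_im.1 ((isSymmetric_toEuclideanLin_iff.2 hA).conj_eigenvalue_eq_self hμ)

lemma IsSymm.eigenvalue_im_eq_zero_and_re_neg {A : Matrix n n ℝ} (hA : A.IsSymm)
    (hdom : ∀ i, A i i + ∑ j ∈ univ.erase i, ‖A i j‖ < 0)
    {μ : ℂ} {v : n → ℂ} (hv : v ≠ 0) (h : A.map Complex.ofReal *ᵥ v = μ • v) :
    μ.im = 0 ∧ μ.re < 0 := by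
  have hherm : (A.map Complex.ofReal).IsHermitian :=
    (isHermitian_iff_isSymm.2 hA).map _ fun x => (Complex.conj_ofReal x).symm
  refine ⟨hherm.im_eq_zero_of_mulVec_eq_smul hv h, ?_⟩
  obtain ⟨i, hi⟩ := eigenvalue_mem_ball (hasEigenvalue_toLin'_of_mulVec_eq_smul hv h)
  rw [Metric.mem_closedBall, dist_eq_norm] at hi
  simp only [map_apply, Complex.norm_real] at hi
  have hre : μ.re - A i i ≤ ‖μ - A i i‖ := by
    simpa using Complex.re_le_norm (μ - A i i)
  linarith [hdom i]

end Matrix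

def skewCirculant {R : Type*} [Neg R] (n : ℕ) (col : ℕ → R) : Matrix (Fin n) (Fin n) R :=
  of fun i j => if (j : ℕ) ≤ i then col (i - j) else -col (i + n - j)

section skewCirculant

variable {R : Type*} {n : ℕ}

lemma skewCirculant_apply_self [Neg R] (col : ℕ → R) (i : Fin n) :
    skewCirculant n col i i = col 0 := by
  simp [skewCirculant]

lemma skewCirculant_isSymm [InvolutiveNeg R] {col : ℕ → R}
    (hcol : ∀ k, 1 ≤ k → k < n → col (n - k) = -col k) : (skewCirculant n col).IsSymm := by
  refine IsSymm.ext fun i j => ?_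
  have := i.isLt
  have := j.isLt
  simp only [skewCirculant, of_apply]
  rcases lt_trichotomy (i : ℕ) j with h | h | h
  · rw [if_pos h.le, if_neg (by omega), show (i : ℕ) + n - j = n - (j - i) by omega,
      hcol _ (by omega) (by omega), neg_neg]
  · rw [Fin.ext h]
  · rw [if_neg (by omega), if_pos h.le, show (j : ℕ) + n - i = n - (i - j) by omega,
      hcol _ (by omega) (by omega), neg_neg]

lemma norm_skewCirculant_apply [SeminormedAddCommGroup R] [NeZero n] (col : ℕ → R)
    (i j : Fin n) : ‖skewCirculant n col i j‖ = ‖col (i - j : Fin n)‖ := by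
  simp only [skewCirculant, of_apply]
  split_ifs with h
  · rw [Fin.coe_sub_iff_le.2 h]
  · rw [norm_neg, Fin.coe_sub_iff_lt.2 (not_le.1 h), add_comm n]

lemma sum_erase_norm_skewCirculant [SeminormedAddCommGroup R] (col : ℕ → R) (i : Fin n) :
    ∑ j ∈ univ.erase i, ‖skewCirculant n col i j‖ = ∑ k ∈ Ico 1 n, ‖col k‖ := by
  have : NeZero n := ⟨i.pos.ne'⟩
  have hrow : ∑ j, ‖skewCirculant n col i j‖ = ∑ k ∈ range n, ‖col k‖ := by
    simp_rw [norm_skewCirculant_apply]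
    exact ((Equiv.subLeft i).sum_comp fun k => ‖col k‖).trans
      (Fin.sum_univ_eq_sum_range (fun k => ‖col k‖) n)
  rw [sum_erase_eq_sub (mem_univ i), hrow, sum_range_eq_add_Ico _ i.pos, skewCirculant_apply_self]
  abel

end skewCirculant

lemma sum_Ico_le_two_mul_of_le_add_reflect {n : ℕ} {f g : ℕ → ℝ}
    (h : ∀ k ∈ Ico 1 n, f k ≤ g k + g (n - k)) :
    ∑ k ∈ Ico 1 n, f k ≤ 2 * ∑ k ∈ Ico 1 n, g k := by
  have hreflect : ∑ k ∈ Ico 1 n, g (n - k) = ∑ k ∈ Ico 1 n, g k := by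
    rw [sum_Ico_reflect _ _ n.le_succ, Nat.add_sub_cancel_left, Nat.add_sub_cancel]
  calc ∑ k ∈ Ico 1 n, f k ≤ ∑ k ∈ Ico 1 n, (g k + g (n - k)) := sum_le_sum h
    _ = 2 * ∑ k ∈ Ico 1 n, g k := by rw [sum_add_distrib, hreflect, two_mul]

lemma rpow_add_one_sub_rpow_sub_one_div_rpow_nonneg {ν : ℝ} (hν : 0 ≤ ν) (γ : ℝ) {x : ℝ}
    (hx : 1 ≤ x) : 0 ≤ ((x + 1) ^ ν - (x - 1) ^ ν) / x ^ γ :=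
  div_nonneg (sub_nonneg.2 (Real.rpow_le_rpow (by linarith) (by linarith) hν))
    (Real.rpow_nonneg (by linarith) γ)

lemma two_mul_sum_abs_coeff_lt_coeff_zero {N : ℕ} (hN : 2 ≤ N) {α γ ν : ℝ} (hα : 0 < α)
    (hν : 0 < ν) {g : ℕ → ℝ}
    (hg0 : g 0 = (∑ ℓ ∈ Icc 1 (N - 1), (((ℓ : ℝ) + 1) ^ ν - ((ℓ : ℝ) - 1) ^ ν) / (ℓ : ℝ) ^ γ)
      + ((N : ℝ) ^ ν - ((N : ℝ) - 1) ^ ν) / (N : ℝ) ^ γ + 2 * ν / (α * (N : ℝ) ^ α))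
    (hgk : ∀ k, 1 ≤ k → k ≤ N - 2 →
      g k = -((((k : ℝ) + 1) ^ ν - ((k : ℝ) - 1) ^ ν) / (2 * (k : ℝ) ^ γ))) :
    2 * ∑ k ∈ Ico 1 (N - 1), |g k| < g 0 := by
  set w : ℕ → ℝ := fun ℓ => (((ℓ : ℝ) + 1) ^ ν - ((ℓ : ℝ) - 1) ^ ν) / (ℓ : ℝ) ^ γ
  have hw : ∀ ℓ, 1 ≤ ℓ → 0 ≤ w ℓ := fun ℓ hℓ =>
    rpow_add_one_sub_rpow_sub_one_div_rpow_nonneg hν.le γ (by exact_mod_cast hℓ)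
  have hgw : ∀ k ∈ Ico 1 (N - 1), 2 * |g k| = w k := by
    intro k hk
    rw [mem_Ico] at hk
    have hwk : 0 ≤ w k := hw k hk.1
    rw [hgk k hk.1 (by omega), abs_neg, show _ / (2 * (k : ℝ) ^ γ) = w k / 2 by ring,
      abs_of_nonneg (by positivity)]
    ring
  have hN1 : (1 : ℝ) ≤ N - 1 := by
    have : (2 : ℝ) ≤ N := by exact_mod_cast hN
    linarith
  have hlast : 0 < ((N : ℝ) ^ ν - ((N : ℝ) - 1) ^ ν) / (N : ℝ) ^ γ :=
    div_pos (sub_pos.2 (Real.rpow_lt_rpow (by linarith) (by linarith) hν))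
      (Real.rpow_pos_of_pos (by linarith) γ)
  have htail : 0 ≤ 2 * ν / (α * (N : ℝ) ^ α) := by positivity
  rw [mul_sum, sum_congr rfl hgw]
  rw [← Ico_add_one_right_eq_Icc, sum_Ico_succ_top (by omega)] at hg0
  linarith [hw (N - 1) (by omega)]

theorem skew_circulant_eigenvalues_neg_general
    (N : ℕ) (hNeven : Even N)
    (α : ℝ) (hα : 1 < α) (hα2 : α < 2)
    (γ ν : ℝ) (hγ : γ = 1 + α / 2) (hν : ν = γ - α)
    (c : ℝ) (hc : 0 < c)
    (g : ℕ → ℝ)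
    (hg0 : g 0 = (∑ ℓ ∈ Finset.Icc 1 (N - 1),
        (((ℓ : ℝ) + 1) ^ ν - ((ℓ : ℝ) - 1) ^ ν) / (ℓ : ℝ) ^ γ)
      + ((N : ℝ) ^ ν - ((N : ℝ) - 1) ^ ν) / (N : ℝ) ^ γ
      + 2 * ν / (α * (N : ℝ) ^ α))
    (hgk : ∀ k, 1 ≤ k → k ≤ N - 2 →
      g k = -((((k : ℝ) + 1) ^ ν - ((k : ℝ) - 1) ^ ν) / (2 * (k : ℝ) ^ γ)))
    -- first column of sk(G): -c • [g 0, g 1, …, g m, -g (n - m - 1), …, -g 1]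
    (col : ℕ → ℝ)
    (hcol : ∀ k, k ≤ N - 2 →
      col k = -c * (if k ≤ (N - 1) / 2 then g k else -g (N - 1 - k)))
    (skG : Matrix (Fin (N - 1)) (Fin (N - 1)) ℝ)
    (hskG : ∀ i j : Fin (N - 1),
      skG i j = if (j : ℕ) ≤ (i : ℕ) then col ((i : ℕ) - (j : ℕ))
        else -col ((i : ℕ) + (N - 1) - (j : ℕ))) :
    ∀ (μ : ℂ) (v : Fin (N - 1) → ℂ), v ≠ 0 →
      (skG.map (Complex.ofReal)).mulVec v = μ • v → μ.im = 0 ∧ μ.re < 0 := by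
  intro μ v hv hmul
  have hν0 : 0 < ν := by rw [hν, hγ]; linarith
  obtain rfl : skG = skewCirculant (N - 1) col := Matrix.ext hskG
  have hcol_skew : ∀ k, 1 ≤ k → k < N - 1 → col (N - 1 - k) = -col k := by
    intro k hk₁ hk₂
    obtain ⟨M, rfl⟩ := hNeven
    rw [hcol k (by omega), hcol (M + M - 1 - k) (by omega)]
    rcases le_or_gt k ((M + M - 1) / 2) with hk | hk
    · rw [if_pos hk, if_neg (show ¬M + M - 1 - k ≤ (M + M - 1) / 2 by omega),
        show M + M - 1 - (M + M - 1 - k) = k by omega]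
      ring
    · rw [if_neg (not_le.2 hk), if_pos (show M + M - 1 - k ≤ (M + M - 1) / 2 by omega)]
      ring
  refine (skewCirculant_isSymm hcol_skew).eigenvalue_im_eq_zero_and_re_neg (fun i => ?_) hv hmul
  have hN : 2 ≤ N := by have := i.pos; omega
  have hrow : ∑ k ∈ Ico 1 (N - 1), ‖col k‖ ≤ c * (2 * ∑ k ∈ Ico 1 (N - 1), |g k|) := by
    rw [mul_left_comm, mul_sum]
    refine sum_Ico_le_two_mul_of_le_add_reflect fun k hk => ?_
    rw [mem_Ico] at hk
    rw [Real.norm_eq_abs, hcol k (by omega), abs_mul, abs_neg, abs_of_pos hc]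
    split_ifs
    · exact le_add_of_nonneg_right (by positivity)
    · rw [abs_neg]
      exact le_add_of_nonneg_left (by positivity)
  have hcoeff := mul_lt_mul_of_pos_left
    (two_mul_sum_abs_coeff_lt_coeff_zero hN (by linarith) hν0 hg0 hgk) hc
  rw [skewCirculant_apply_self, sum_erase_norm_skewCirculant, hcol 0 (by omega),
    if_pos (Nat.zero_le _)]
  linarith

theorem skew_circulant_eigenvalues_neg
    (N : ℕ) (hN : 2 ≤ N) (hNeven : Even N)
    (α : ℝ) (hα : 1 < α) (hα2 : α < 2)
    (γ ν : ℝ) (hγ : γ = 1 + α / 2) (hν : ν = γ - α)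
    (c : ℝ) (hc : 0 < c)
    (g : ℕ → ℝ)
    (hg0 : g 0 = (∑ ℓ ∈ Finset.Icc 1 (N - 1),
        (((ℓ : ℝ) + 1) ^ ν - ((ℓ : ℝ) - 1) ^ ν) / (ℓ : ℝ) ^ γ)
      + ((N : ℝ) ^ ν - ((N : ℝ) - 1) ^ ν) / (N : ℝ) ^ γ
      + 2 * ν / (α * (N : ℝ) ^ α))
    (hgk : ∀ k, 1 ≤ k → k ≤ N - 2 →
      g k = -((((k : ℝ) + 1) ^ ν - ((k : ℝ) - 1) ^ ν) / (2 * (k : ℝ) ^ γ)))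
    -- first column of sk(G): -c • [g 0, g 1, …, g m, -g (n - m - 1), …, -g 1]
    (col : ℕ → ℝ)
    (hcol : ∀ k, k ≤ N - 2 →
      col k = -c * (if k ≤ (N - 1) / 2 then g k else -g (N - 1 - k)))
    (skG : Matrix (Fin (N - 1)) (Fin (N - 1)) ℝ)
    (hskG : ∀ i j : Fin (N - 1),
      skG i j = if (j : ℕ) ≤ (i : ℕ) then col ((i : ℕ) - (j : ℕ))
        else -col ((i : ℕ) + (N - 1) - (j : ℕ))) :
    ∀ (μ : ℂ) (v : Fin (N - 1) → ℂ), v ≠ 0 →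
      (skG.map (Complex.ofReal)).mulVec v = μ • v → μ.im = 0 ∧ μ.re < 0 :=
  skew_circulant_eigenvalues_neg_general N hNeven α hα hα2 γ ν hγ hν c hc g hg0 hgk col hcol skG
    hskG
end

section
/- Let α ∈ (1,2), ν = 1 - α/2, γ = 1 + α/2, and let C₆ = ∑_{ℓ=1}^∞ ((ℓ+1)^ν - (ℓ-1)^ν)/ℓ^γ (a finite positive constant depending only on α). Then for the Toeplitz matrix G with coefficients g_k and its Strang-type skew-circulant approximation sk(G), one has ‖sk(G) - G‖_∞ / ‖G‖_∞ < (3/2 + 2ν/(α C₆ N^α))^{-1}. -/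
/-!
For odd `N - 1` the matrix `sk(G) - G` vanishes on the band `|i - j| ≤ (N - 1) / 2`, and
beyond it has entries `-c_h (g_k + g_{N-1-k}) = c_h (a_k + a_{N-1-k}) / 2`, where `k = |i - j|`
and `a_k = ((k+1)^ν - (k-1)^ν) / k^γ ≥ 0`. Each distance beyond the band occurs at most once in
a row, so pairing `k` with `N - 1 - k` bounds every row sum by `(c_h / 2) S` with
`S = ∑_{k=1}^{N-2} a_k ≤ C₆`. The diagonal entry alone gives `‖G‖_∞ ≥ c_h (S + d)` with
`d = 2ν / (α N^α)`, and `(S / 2) / (S + d) < (3/2 + d / C₆)⁻¹` follows from `S ≤ C₆`.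
-/

/-- Maximum absolute row sum norm of a matrix indexed by `Fin n`. -/
noncomputable def rowSumNorm {n : ℕ} (M : Matrix (Fin n) (Fin n) ℝ) : ℝ :=
  ⨆ i : Fin n, ∑ j : Fin n, |M i j|

open Finset

theorem abs_apply_le_rowSumNorm {n : ℕ} (M : Matrix (Fin n) (Fin n) ℝ) (i j : Fin n) :
    |M i j| ≤ rowSumNorm M :=
  (single_le_sum (f := fun j => |M i j|) (fun _ _ => abs_nonneg _) (mem_univ j)).trans
    (le_ciSup (f := fun i => ∑ j, |M i j|) (Set.finite_range _).bddAbove i)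

theorem rowSumNorm_le {n : ℕ} {M : Matrix (Fin n) (Fin n) ℝ} {b : ℝ} (hb : 0 ≤ b)
    (h : ∀ i, ∑ j, |M i j| ≤ b) : rowSumNorm M ≤ b :=
  Real.iSup_le h hb

noncomputable def centralDiffWeight (ν γ : ℝ) (k : ℕ) : ℝ :=
  (((k : ℝ) + 1) ^ ν - ((k : ℝ) - 1) ^ ν) / (k : ℝ) ^ γ

section CentralDiffWeight

variable {ν γ : ℝ}

theorem centralDiffWeight_nonneg (hν : 0 ≤ ν) {k : ℕ} (hk : 1 ≤ k) :
    0 ≤ centralDiffWeight ν γ k := by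
  have hk' : (1 : ℝ) ≤ k := by exact_mod_cast hk
  refine div_nonneg (sub_nonneg.2 ?_) (by positivity)
  exact Real.rpow_le_rpow (by linarith) (by linarith) hν

theorem centralDiffWeight_le (hν : 0 ≤ ν) (hν1 : ν ≤ 1) {k : ℕ} (hk : 1 ≤ k) :
    centralDiffWeight ν γ k ≤ 2 / (k : ℝ) ^ γ := by
  have hk' : (1 : ℝ) ≤ k := by exact_mod_cast hk
  have hsub : ((k : ℝ) - 1 + 2) ^ ν ≤ ((k : ℝ) - 1) ^ ν + 2 ^ ν :=
    Real.rpow_add_le_add_rpow (by linarith) (by norm_num) hν hν1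
  have htwo : (2 : ℝ) ^ ν ≤ 2 := by
    simpa using Real.rpow_le_rpow_of_exponent_le (by norm_num : (1 : ℝ) ≤ 2) hν1
  rw [show (k : ℝ) - 1 + 2 = k + 1 by ring] at hsub
  exact div_le_div_of_nonneg_right (by linarith) (by positivity)

theorem summable_centralDiffWeight_succ (hν : 0 ≤ ν) (hν1 : ν ≤ 1) (hγ : 1 < γ) :
    Summable fun ℓ : ℕ => centralDiffWeight ν γ (ℓ + 1) := by
  have hmajor : Summable fun ℓ : ℕ => 2 / ((ℓ + 1 : ℕ) : ℝ) ^ γ := by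
    simpa [div_eq_mul_inv] using
      ((summable_nat_add_iff 1).2 (Real.summable_one_div_nat_rpow.2 hγ)).mul_left 2
  exact hmajor.of_nonneg_of_le (fun ℓ => centralDiffWeight_nonneg hν (by omega))
    fun ℓ => centralDiffWeight_le hν hν1 (by omega)

theorem sum_Ioo_centralDiffWeight_le_tsum (hν : 0 ≤ ν) (hν1 : ν ≤ 1) (hγ : 1 < γ)
    (n : ℕ) :
    ∑ k ∈ Ioo 0 n, centralDiffWeight ν γ k ≤
      ∑' ℓ : ℕ, centralDiffWeight ν γ (ℓ + 1) := by
  rw [← Finset.Ico_add_one_left_eq_Ioo, sum_Ico_eq_sum_range]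
  simp only [zero_add, add_comm 1]
  exact (summable_centralDiffWeight_succ hν hν1 hγ).sum_le_tsum _
    fun ℓ _ => centralDiffWeight_nonneg hν (by omega)

theorem sum_Ioo_centralDiffWeight_le_sum_Icc_add (hν : 0 ≤ ν) {N : ℕ} (hN : 1 ≤ N) :
    ∑ k ∈ Ioo 0 (N - 1), centralDiffWeight ν γ k ≤
      ∑ k ∈ Icc 1 (N - 1), centralDiffWeight ν γ k +
        ((N : ℝ) ^ ν - ((N : ℝ) - 1) ^ ν) / (N : ℝ) ^ γ := by
  have hIoo_sub : Ioo 0 (N - 1) ⊆ Icc 1 (N - 1) := fun k hk => by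
    simp only [mem_Ioo, mem_Icc] at hk ⊢
    omega
  have hN' : (1 : ℝ) ≤ N := by exact_mod_cast hN
  have hlast : 0 ≤ ((N : ℝ) ^ ν - ((N : ℝ) - 1) ^ ν) / (N : ℝ) ^ γ :=
    div_nonneg (sub_nonneg.2 (Real.rpow_le_rpow (by linarith) (by linarith) hν)) (by positivity)
  linarith [sum_le_sum_of_subset_of_nonneg hIoo_sub fun k hk _ =>
    centralDiffWeight_nonneg (γ := γ) hν (mem_Icc.1 hk).1]

end CentralDiffWeight

theorem skewStrang_sub_toeplitz_apply {n : ℕ} (hn : Odd n) {t col : ℕ → ℝ}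
    (hcol : ∀ k, k ≤ n - 1 → col k = if k ≤ n / 2 then t k else -t (n - k)) (i j : Fin n) :
    (if (j : ℕ) ≤ i then col (i - j) else -col (i + n - j)) - t ((i : ℤ) - j).natAbs =
      if n / 2 < ((i : ℤ) - j).natAbs then
        -(t ((i : ℤ) - j).natAbs + t (n - ((i : ℤ) - j).natAbs))
      else 0 := by
  obtain ⟨h, rfl⟩ := hn
  have hi := i.isLt
  have hj := j.isLt
  have hhalf : (2 * h + 1) / 2 = h := by omega
  rw [hhalf] at hcol ⊢
  split_ifs with hji hfar
  · rw [hcol _ (by omega), if_neg (by omega), show (i : ℕ) - j = ((i : ℤ) - j).natAbs by omega]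
    ring
  · rw [hcol _ (by omega), if_pos (by omega), show (i : ℕ) - j = ((i : ℤ) - j).natAbs by omega]
    ring
  · rw [hcol _ (by omega), if_pos (by omega),
      show (i : ℕ) + (2 * h + 1) - j = 2 * h + 1 - ((i : ℤ) - j).natAbs by omega]
    ring
  · rw [hcol _ (by omega), if_neg (by omega),
      show 2 * h + 1 - ((i : ℕ) + (2 * h + 1) - j) = ((i : ℤ) - j).natAbs by omega]
    ring

/-- A distance `k > n / 2` from `i` is attained by at most one `j`, since `i - k` and `i + k`
cannot both lie in `[0, n)`. -/
theorem sum_ite_half_lt_natAbs_sub_le {n : ℕ} (i : Fin n) {f : ℕ → ℝ}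
    (hf : ∀ k, 0 ≤ f k) :
    ∑ j : Fin n, (if n / 2 < ((i : ℤ) - j).natAbs then f ((i : ℤ) - j).natAbs else 0) ≤
      ∑ k ∈ Ioo (n / 2) n, f k := by
  rw [← sum_filter, ← sum_image (g := fun j : Fin n => ((i : ℤ) - j).natAbs)]
  · refine sum_le_sum_of_subset_of_nonneg ?_ fun k _ _ => hf k
    intro k hk
    simp only [mem_image, mem_filter, mem_univ, true_and] at hk
    obtain ⟨j, hfar, rfl⟩ := hk
    have := i.isLt
    have := j.isLt
    exact mem_Ioo.2 ⟨hfar, by omega⟩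
  · intro j hj j' hj' hjj'
    simp only [mem_coe, mem_filter, mem_univ, true_and] at hj hj'
    dsimp only at hjj'
    have := j.isLt
    have := j'.isLt
    exact Fin.ext (by omega)

theorem sum_Ioo_half_add_reflect {n : ℕ} (hn : Odd n) (f : ℕ → ℝ) :
    ∑ k ∈ Ioo (n / 2) n, (f k + f (n - k)) = ∑ k ∈ Ioo 0 n, f k := by
  obtain ⟨h, rfl⟩ := hn
  have hIoo : ∀ a, Ioo a (2 * h + 1) = Ioc a (2 * h) := fun a => by
    ext
    simp only [mem_Ioo, mem_Ioc]
    omega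
  have hreflect : ∑ k ∈ Ioc h (2 * h), f (2 * h + 1 - k) = ∑ k ∈ Ioc 0 h, f k := by
    refine sum_nbij' (fun k => 2 * h + 1 - k) (fun k => 2 * h + 1 - k) ?_ ?_ ?_ ?_
      fun _ _ => rfl <;> intro k hk <;> simp only [mem_Ioc] at hk ⊢ <;> omega
  rw [show (2 * h + 1) / 2 = h by omega, hIoo, hIoo, sum_add_distrib, hreflect, add_comm,
    sum_Ioc_consecutive _ (Nat.zero_le h) (by omega)]

theorem sum_Ioo_half_abs_add_reflect {n : ℕ} (hn : Odd n) {t a : ℕ → ℝ} {c : ℝ}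
    (hc : 0 ≤ c) (ha : ∀ k ∈ Ioo 0 n, 0 ≤ a k) (ht : ∀ k ∈ Ioo 0 n, t k = c * a k) :
    ∑ k ∈ Ioo (n / 2) n, |t k + t (n - k)| = c * ∑ k ∈ Ioo 0 n, a k := by
  rw [← sum_Ioo_half_add_reflect hn, mul_sum]
  refine sum_congr rfl fun k hk => ?_
  have hk' : k ∈ Ioo 0 n := by simp only [mem_Ioo] at hk ⊢; omega
  have hnk : n - k ∈ Ioo 0 n := by simp only [mem_Ioo] at hk ⊢; omega
  have hsum : 0 ≤ a k + a (n - k) := add_nonneg (ha k hk') (ha _ hnk)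
  rw [ht k hk', ht (n - k) hnk, ← mul_add, abs_of_nonneg (mul_nonneg hc hsum)]

theorem rowSumNorm_skewStrang_sub_toeplitz_le {n : ℕ} (hn : Odd n) {t col : ℕ → ℝ}
    (hcol : ∀ k, k ≤ n - 1 → col k = if k ≤ n / 2 then t k else -t (n - k))
    {T skT : Matrix (Fin n) (Fin n) ℝ} (hT : ∀ i j : Fin n, T i j = t ((i : ℤ) - j).natAbs)
    (hskT : ∀ i j : Fin n, skT i j = if (j : ℕ) ≤ i then col (i - j) else -col (i + n - j)) :
    rowSumNorm (skT - T) ≤ ∑ k ∈ Ioo (n / 2) n, |t k + t (n - k)| := by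
  refine rowSumNorm_le (sum_nonneg fun _ _ => abs_nonneg _) fun i => ?_
  calc ∑ j, |(skT - T) i j|
      = ∑ j : Fin n, if n / 2 < ((i : ℤ) - j).natAbs then
          |t ((i : ℤ) - j).natAbs + t (n - ((i : ℤ) - j).natAbs)| else 0 := by
        refine sum_congr rfl fun j _ => ?_
        rw [Matrix.sub_apply, hskT, hT, skewStrang_sub_toeplitz_apply hn hcol]
        split_ifs <;> simp only [abs_neg, abs_zero]
    _ ≤ _ := sum_ite_half_lt_natAbs_sub_le i (f := fun k => |t k + t (n - k)|)
      fun _ => abs_nonneg _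

theorem div_two_div_add_lt_inv {S C d : ℝ} (hS : 0 ≤ S) (hSC : S ≤ C) (hd : 0 < d) :
    S / 2 / (S + d) < (3 / 2 + d / C)⁻¹ := by
  rcases (hS.trans hSC).eq_or_lt with hC | hC
  · subst hC
    rw [show S = 0 by linarith]
    norm_num
  have hdC : S * (d / C) ≤ d := by
    rw [mul_div_assoc', div_le_iff₀ hC]
    nlinarith
  rw [div_div, div_lt_iff₀ (by positivity), ← div_eq_inv_mul, lt_div_iff₀ (by positivity)]
  nlinarith

theorem skew_circulant_relative_error_bound
    (N : ℕ) (hN : 2 ≤ N) (hNeven : Even N)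
    (α : ℝ) (hα : 1 < α) (hα2 : α < 2)
    (γ ν : ℝ) (hγ : γ = 1 + α / 2) (hν : ν = 1 - α / 2)
    (C₆ : ℝ)
    (hC₆ : C₆ = ∑' ℓ : ℕ,
      ((((ℓ : ℝ) + 1) + 1) ^ ν - (((ℓ : ℝ) + 1) - 1) ^ ν) / ((ℓ : ℝ) + 1) ^ γ)
    (c : ℝ) (hc : 0 < c)
    (g : ℕ → ℝ)
    (hg0 : g 0 = (∑ ℓ ∈ Finset.Icc 1 (N - 1),
        (((ℓ : ℝ) + 1) ^ ν - ((ℓ : ℝ) - 1) ^ ν) / (ℓ : ℝ) ^ γ)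
      + ((N : ℝ) ^ ν - ((N : ℝ) - 1) ^ ν) / (N : ℝ) ^ γ
      + 2 * ν / (α * (N : ℝ) ^ α))
    (hgk : ∀ k, 1 ≤ k → k ≤ N - 2 →
      g k = -((((k : ℝ) + 1) ^ ν - ((k : ℝ) - 1) ^ ν) / (2 * (k : ℝ) ^ γ)))
    (G skG : Matrix (Fin (N - 1)) (Fin (N - 1)) ℝ)
    (hG : ∀ i j : Fin (N - 1),
      G i j = -c * g (Int.natAbs ((i : ℤ) - (j : ℤ))))
    (col : ℕ → ℝ)
    (hcol : ∀ k, k ≤ N - 2 →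
      col k = -c * (if k ≤ (N - 1) / 2 then g k else -g (N - 1 - k)))
    (hskG : ∀ i j : Fin (N - 1),
      skG i j = if (j : ℕ) ≤ (i : ℕ) then col ((i : ℕ) - (j : ℕ))
        else -col ((i : ℕ) + (N - 1) - (j : ℕ))) :
    rowSumNorm (skG - G) / rowSumNorm G <
      (3 / 2 + 2 * ν / (α * C₆ * (N : ℝ) ^ α))⁻¹ := by
  have hν0 : 0 < ν := by linarith
  have hν1 : ν ≤ 1 := by linarith
  have hγ1 : 1 < γ := by linarith
  have hodd : Odd (N - 1) := by
    obtain ⟨r, rfl⟩ := hNeven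
    exact ⟨r - 1, by omega⟩
  have hw : ∀ k, 1 ≤ k → 0 ≤ centralDiffWeight ν γ k :=
    fun _ => centralDiffWeight_nonneg hν0.le
  set S := ∑ k ∈ Ioo 0 (N - 1), centralDiffWeight ν γ k
  set d := 2 * ν / (α * (N : ℝ) ^ α) with hd
  have hnum : rowSumNorm (skG - G) ≤ c / 2 * S := by
    refine (rowSumNorm_skewStrang_sub_toeplitz_le hodd (t := fun k => -c * g k)
      (fun k hk => by rw [hcol k (by omega)]; split_ifs <;> ring) hG hskG).trans_eq ?_
    refine sum_Ioo_half_abs_add_reflect hodd (by positivity) (fun k hk => hw k (mem_Ioo.1 hk).1)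
      fun k hk => ?_
    rw [mem_Ioo] at hk
    rw [hgk k (by omega) (by omega), centralDiffWeight]
    ring
  have hden : c * (S + d) ≤ rowSumNorm G := by
    have hSg0 : S + d ≤ g 0 := by
      rw [hg0]
      exact add_le_add (sum_Ioo_centralDiffWeight_le_sum_Icc_add hν0.le (by omega)) le_rfl
    let i₀ : Fin (N - 1) := ⟨0, by omega⟩
    calc c * (S + d) ≤ c * |g 0| := by gcongr; exact hSg0.trans (le_abs_self _)
      _ = |G i₀ i₀| := by rw [hG, sub_self, Int.natAbs_zero, abs_mul, abs_neg, abs_of_pos hc]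
      _ ≤ rowSumNorm G := abs_apply_le_rowSumNorm G i₀ i₀
  have hSC : S ≤ C₆ := by
    convert sum_Ioo_centralDiffWeight_le_tsum hν0.le hν1 hγ1 (N - 1) using 1
    rw [hC₆]
    push_cast [centralDiffWeight]
    rfl
  have hS0 : 0 ≤ S := sum_nonneg fun k hk => hw k (mem_Ioo.1 hk).1
  calc rowSumNorm (skG - G) / rowSumNorm G ≤ c / 2 * S / (c * (S + d)) :=
        div_le_div₀ (by positivity) hnum (by positivity) hden
    _ = S / 2 / (S + d) := by field_simp
    _ < (3 / 2 + d / C₆)⁻¹ := div_two_div_add_lt_inv hS0 hSC (by positivity)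
    _ = (3 / 2 + 2 * ν / (α * C₆ * (N : ℝ) ^ α))⁻¹ := by rw [hd, div_div, mul_right_comm]
end

section
/- Let φ^k be vectors in ℝ^{N-1} equipped with a discrete inner product, let A = -δ_h^α be a symmetric positive definite operator with square root Ã, and define E_h(φ) = (1/4)‖φ‖₄⁴ - (1/2)‖φ‖₂² + (1/4)|Ω| + (ε²/2)‖Ãφ‖₂² and the modified energy 𝓔(p, u) = E_h(p) + (1/(4τ))‖p - u‖_{A^{-1}}² + (1/2)‖p - u‖₂². If the sequence {φ^k} satisfies the modified BDF2 scheme (3φ^{k+1} - 4φ^k + φ^{k-1})/(2τ) = -Aμ^{k+1} with μ^{k+1} = (φ^{k+1})³ - 2φ^k + φ^{k-1} + ε²Aφ^{k+1} + στA(φ^{k+1} - φ^k) and σ ≥ 1/16, then 𝓔(φ^{k+1}, φ^k) ≤ 𝓔(φ^k, φ^{k-1}) for all k ≥ 1. -/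
/-!
Test the scheme against `A⁻¹(φᵏ⁺¹ - φᵏ)`. Convexity of `∑ ψᵢ⁴ / 4` and of `‖Ãψ‖²` and concavity
of `-‖ψ‖² / 2` bound `E_h(φᵏ⁺¹) - E_h(φᵏ)` by `⟨μᵏ⁺¹, φᵏ⁺¹ - φᵏ⟩` minus dissipative terms. The BDF2
quotient turns this pairing into `A⁻¹`-products of the last two increments, which the `1/(4τ)` term
of `𝓔` telescopes by Cauchy–Schwarz; the `L²` increment left by the explicit concave term is absorbed
by the stabilization `στ ‖Ã(φᵏ⁺¹ - φᵏ)‖²` through `‖x‖² ≤ ‖x‖_{A⁻¹} ‖x‖_A`.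
-/

open Matrix Finset

section DotProduct

variable {ι : Type*} [Fintype ι]

theorem two_mul_mul_dotProduct_le (t : ℝ) (x y : ι → ℝ) :
    2 * t * (x ⬝ᵥ y) ≤ x ⬝ᵥ x + t ^ 2 * (y ⬝ᵥ y) := by
  simp only [dotProduct, mul_sum, ← sum_add_distrib]
  exact sum_le_sum fun i _ => by nlinarith [sq_nonneg (x i - t * y i)]

theorem dotProduct_self_sub_dotProduct_self (x y : ι → ℝ) :
    x ⬝ᵥ x - y ⬝ᵥ y = 2 * (y ⬝ᵥ (x - y)) + (x - y) ⬝ᵥ (x - y) := by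
  simp only [dotProduct_sub, sub_dotProduct, dotProduct_comm x y]
  ring

theorem sum_pow_four_sub_le (x y : ι → ℝ) :
    (∑ i, x i ^ 4 - ∑ i, y i ^ 4) / 4 ≤ (fun i => x i ^ 3) ⬝ᵥ (x - y) := by
  rw [← sum_sub_distrib, sum_div]
  refine sum_le_sum fun i _ => ?_
  dsimp only [Pi.sub_apply]
  nlinarith [mul_nonneg (sq_nonneg (x i - y i)) (sq_nonneg (x i)),
    mul_nonneg (sq_nonneg (x i - y i)) (sq_nonneg (x i + y i))]

end DotProduct

section SquareRoot

variable {ι : Type*} [Fintype ι] {S Ainv : Matrix ι ι ℝ}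

theorem mul_self_mulVec_dotProduct (hS : S.IsSymm) (x y : ι → ℝ) :
    (S * S) *ᵥ x ⬝ᵥ y = S *ᵥ x ⬝ᵥ S *ᵥ y := by
  rw [← mulVec_mulVec, dotProduct_comm, dotProduct_mulVec, ← mulVec_transpose, hS.eq,
    dotProduct_comm]

theorem mul_self_mulVec_dotProduct_comm (hS : S.IsSymm) (x y : ι → ℝ) :
    (S * S) *ᵥ x ⬝ᵥ y = x ⬝ᵥ (S * S) *ᵥ y := by
  rw [mul_self_mulVec_dotProduct hS, dotProduct_comm x, mul_self_mulVec_dotProduct hS,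
    dotProduct_comm]

theorem mulVec_mulVec_of_mul_eq_one [DecidableEq ι] {A B : Matrix ι ι ℝ} (hAB : A * B = 1)
    (x : ι → ℝ) : A *ᵥ (B *ᵥ x) = x := by
  rw [mulVec_mulVec, hAB, one_mulVec]

variable [DecidableEq ι]

theorem dotProduct_mulVec_inv (hS : S.IsSymm) (hAinv : S * S * Ainv = 1) (x y : ι → ℝ) :
    x ⬝ᵥ Ainv *ᵥ y = S *ᵥ (Ainv *ᵥ x) ⬝ᵥ S *ᵥ (Ainv *ᵥ y) := by
  conv_lhs => rw [← mulVec_mulVec_of_mul_eq_one hAinv x]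
  rw [mul_self_mulVec_dotProduct hS]

theorem two_mul_dotProduct_mulVec_inv_le (hS : S.IsSymm) (hAinv : S * S * Ainv = 1)
    (x y : ι → ℝ) : 2 * (y ⬝ᵥ Ainv *ᵥ x) ≤ Ainv *ᵥ x ⬝ᵥ x + Ainv *ᵥ y ⬝ᵥ y := by
  rw [dotProduct_comm (Ainv *ᵥ x), dotProduct_comm (Ainv *ᵥ y)]
  simp only [dotProduct_mulVec_inv hS hAinv]
  linarith [two_mul_mul_dotProduct_le 1 (S *ᵥ (Ainv *ᵥ y)) (S *ᵥ (Ainv *ᵥ x))]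

/-- The interpolation `‖x‖² ≤ ‖x‖_{A⁻¹} ‖x‖_A` followed by Young's inequality with weight `τ / 4`;
this is where `σ ≥ 1/16` is needed. -/
theorem dotProduct_self_le_mulVec_inv (hS : S.IsSymm) (hAinv : S * S * Ainv = 1)
    {τ σ : ℝ} (hτ : 0 < τ) (hσ : 1 / 16 ≤ σ) (x : ι → ℝ) :
    x ⬝ᵥ x / 2 ≤ Ainv *ᵥ x ⬝ᵥ x / τ + σ * τ * (S *ᵥ x ⬝ᵥ S *ᵥ x) := by
  have hx : x ⬝ᵥ x = S *ᵥ (Ainv *ᵥ x) ⬝ᵥ S *ᵥ x := by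
    conv_lhs => rw [← mulVec_mulVec_of_mul_eq_one hAinv x]
    rw [dotProduct_comm, mul_self_mulVec_dotProduct hS, mulVec_mulVec_of_mul_eq_one hAinv]
  have hyoung := two_mul_mul_dotProduct_le (τ / 4) (S *ᵥ (Ainv *ᵥ x)) (S *ᵥ x)
  have hSx : 0 ≤ S *ᵥ x ⬝ᵥ S *ᵥ x := dotProduct_self_star_nonneg _
  rw [dotProduct_comm (Ainv *ᵥ x), dotProduct_mulVec_inv hS hAinv, hx, div_add' _ _ _ hτ.ne',
    div_le_div_iff₀ two_pos hτ]
  nlinarith [mul_nonneg (mul_nonneg (sub_nonneg.2 hσ) (sq_nonneg τ)) hSx]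

end SquareRoot

noncomputable section Energy

variable {ι : Type*} [Fintype ι]

/-- `E_h / h - |Ω| / 4`, with `S` in the role of `Ã`. -/
def bulkEnergy (S : Matrix ι ι ℝ) (ε : ℝ) (p : ι → ℝ) : ℝ :=
  (∑ i, p i ^ 4) / 4 - p ⬝ᵥ p / 2 + ε ^ 2 / 2 * (S *ᵥ p ⬝ᵥ S *ᵥ p)

/-- `𝓔 / h - |Ω| / 4`. -/
def modifiedEnergy (S Ainv : Matrix ι ι ℝ) (τ ε : ℝ) (p q : ι → ℝ) : ℝ :=
  bulkEnergy S ε p + Ainv *ᵥ (p - q) ⬝ᵥ (p - q) / (4 * τ) + (p - q) ⬝ᵥ (p - q) / 2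

variable {S Ainv : Matrix ι ι ℝ}

theorem bulkEnergy_sub_le (hS : S.IsSymm) (ε : ℝ) (u v : ι → ℝ) :
    bulkEnergy S ε u - bulkEnergy S ε v ≤
      ((fun i => u i ^ 3) - v + ε ^ 2 • (S * S) *ᵥ u) ⬝ᵥ (u - v) - (u - v) ⬝ᵥ (u - v) / 2
        - ε ^ 2 / 2 * (S *ᵥ (u - v) ⬝ᵥ S *ᵥ (u - v)) := by
  set a := u - v with ha
  have hquartic := sum_pow_four_sub_le u v
  have hL2 := dotProduct_self_sub_dotProduct_self u v
  have hH1 := dotProduct_self_sub_dotProduct_self (S *ᵥ u) (S *ᵥ v)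
  have hSu : S *ᵥ u ⬝ᵥ S *ᵥ a = S *ᵥ v ⬝ᵥ S *ᵥ a + S *ᵥ a ⬝ᵥ S *ᵥ a := by
    rw [← add_dotProduct, ← mulVec_add, ha, add_sub_cancel]
  rw [← mulVec_sub] at hH1
  simp only [bulkEnergy, add_dotProduct, sub_dotProduct _ v, smul_dotProduct, smul_eq_mul,
    mul_self_mulVec_dotProduct hS]
  linear_combination hquartic - (1 / 2) * hL2 + (ε ^ 2 / 2) * hH1 - ε ^ 2 * hSu

variable [DecidableEq ι]

theorem dotProduct_sub_eq_of_scheme (hS : S.IsSymm) (hAinv : S * S * Ainv = 1) {τ : ℝ}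
    {u v w m : ι → ℝ}
    (hscheme : (3 : ℝ) • u - (4 : ℝ) • v + w = (2 * τ) • (-((S * S) *ᵥ m))) :
    2 * τ * (m ⬝ᵥ (u - v)) = (v - w) ⬝ᵥ Ainv *ᵥ (u - v) - 3 * (Ainv *ᵥ (u - v) ⬝ᵥ (u - v)) := by
  set a := u - v
  set b := v - w
  have hlhs : (3 : ℝ) • u - (4 : ℝ) • v + w = (3 : ℝ) • a - b := by module
  have htest := congrArg (· ⬝ᵥ Ainv *ᵥ a) hscheme
  simp only [hlhs, sub_dotProduct _ b, smul_dotProduct, neg_dotProduct, smul_eq_mul,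
    mul_self_mulVec_dotProduct_comm hS, mulVec_mulVec_of_mul_eq_one hAinv] at htest
  rw [dotProduct_comm (Ainv *ᵥ a)]
  linear_combination htest

theorem modifiedEnergy_le_of_scheme (hS : S.IsSymm) (hAinv : S * S * Ainv = 1)
    {τ ε σ : ℝ} (hτ : 0 < τ) (hσ : 1 / 16 ≤ σ) {u v w m : ι → ℝ}
    (hscheme : (3 : ℝ) • u - (4 : ℝ) • v + w = (2 * τ) • (-((S * S) *ᵥ m)))
    (hm : m = (fun i => u i ^ 3) - (2 : ℝ) • v + w
        + ε ^ 2 • (S * S) *ᵥ u + (σ * τ) • (S * S) *ᵥ (u - v)) :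
    modifiedEnergy S Ainv τ ε u v ≤ modifiedEnergy S Ainv τ ε v w := by
  have hbulk := bulkEnergy_sub_le hS ε u v
  have hpairing : m ⬝ᵥ (u - v) = ((fun i => u i ^ 3) - v + ε ^ 2 • (S * S) *ᵥ u) ⬝ᵥ (u - v)
      - (v - w) ⬝ᵥ (u - v) + σ * τ * (S *ᵥ (u - v) ⬝ᵥ S *ᵥ (u - v)) := by
    rw [hm, show (fun i => u i ^ 3) - (2 : ℝ) • v + w = (fun i => u i ^ 3) - v - (v - w) by
      module]
    simp only [add_dotProduct, sub_dotProduct, smul_dotProduct, smul_eq_mul,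
      mul_self_mulVec_dotProduct hS]
    ring
  have hcs := two_mul_dotProduct_mulVec_inv_le hS hAinv (u - v) (v - w)
  have hinterp := dotProduct_self_le_mulVec_inv hS hAinv hτ hσ (u - v)
  have hba := two_mul_mul_dotProduct_le 1 (v - w) (u - v)
  have hSa : 0 ≤ S *ᵥ (u - v) ⬝ᵥ S *ᵥ (u - v) := dotProduct_self_star_nonneg _
  have hscheme_pairing : m ⬝ᵥ (u - v) =
      ((v - w) ⬝ᵥ Ainv *ᵥ (u - v) - 3 * (Ainv *ᵥ (u - v) ⬝ᵥ (u - v))) / (2 * τ) := by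
    rw [← dotProduct_sub_eq_of_scheme hS hAinv hscheme]
    field_simp
  unfold modifiedEnergy
  linear_combination hbulk - hpairing + hscheme_pairing + (1 / (4 * τ)) * hcs + (1 / 2) * hba + hinterp
    + (ε ^ 2 / 2) * hSa

end Energy

theorem mBDF2_energy_stability_general
    {n : ℕ} (h τ ε σ Ω : ℝ)
    (hh : 0 < h) (hτ : 0 < τ) (hσ : 1 / 16 ≤ σ)
    (A At Ainv : Matrix (Fin n) (Fin n) ℝ)
    (hAt : At * At = A) (hAtsym : At.IsSymm)
    (hAinv : A * Ainv = 1)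
    (φ μ : ℕ → Fin n → ℝ)
    -- discrete energy
    (Eh : (Fin n → ℝ) → ℝ)
    (hEh : ∀ ψ : Fin n → ℝ, Eh ψ =
      (1 / 4) * (h * ∑ i, (ψ i) ^ 4) - (1 / 2) * (h * ∑ i, (ψ i) ^ 2)
        + (1 / 4) * Ω + (ε ^ 2 / 2) * (h * ∑ i, (At.mulVec ψ i) ^ 2))
    -- modified energy
    (En : (Fin n → ℝ) → (Fin n → ℝ) → ℝ)
    (hEn : ∀ p u : Fin n → ℝ, En p u =
      Eh p + (1 / (4 * τ)) * (h * ∑ i, Ainv.mulVec (p - u) i * (p - u) i)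
        + (1 / 2) * (h * ∑ i, ((p - u) i) ^ 2))
    -- the modified BDF2 scheme
    (hscheme1 : ∀ k, 1 ≤ k →
      (3 : ℝ) • φ (k + 1) - (4 : ℝ) • φ k + φ (k - 1) =
        (2 * τ) • (-(A.mulVec (μ (k + 1)))))
    (hscheme2 : ∀ k, 1 ≤ k →
      μ (k + 1) = (fun i => (φ (k + 1) i) ^ 3) - (2 : ℝ) • φ k + φ (k - 1)
        + ε ^ 2 • A.mulVec (φ (k + 1)) + (σ * τ) • A.mulVec (φ (k + 1) - φ k)) :
    ∀ k, 1 ≤ k → En (φ (k + 1)) (φ k) ≤ En (φ k) (φ (k - 1)) := by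
  subst hAt
  have hEn_eq : ∀ p q, En p q = h * modifiedEnergy At Ainv τ ε p q + Ω / 4 := by
    intro p q
    simp only [hEn, hEh, modifiedEnergy, bulkEnergy, dotProduct, sq]
    ring
  intro k hk
  rw [hEn_eq, hEn_eq]
  gcongr
  exact modifiedEnergy_le_of_scheme hAtsym hAinv hτ hσ (hscheme1 k hk) (hscheme2 k hk)

theorem mBDF2_energy_stability
    {n : ℕ} (h τ ε σ Ω : ℝ)
    (hh : 0 < h) (hτ : 0 < τ) (hε : 0 < ε) (hΩ : 0 ≤ Ω) (hσ : 1 / 16 ≤ σ)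
    (A At Ainv : Matrix (Fin n) (Fin n) ℝ)
    (hApos : A.PosDef) (hAsym : A.IsSymm)
    (hAt : At * At = A) (hAtsym : At.IsSymm)
    (hAinv : A * Ainv = 1)
    (φ μ : ℕ → Fin n → ℝ)
    -- discrete energy
    (Eh : (Fin n → ℝ) → ℝ)
    (hEh : ∀ ψ : Fin n → ℝ, Eh ψ =
      (1 / 4) * (h * ∑ i, (ψ i) ^ 4) - (1 / 2) * (h * ∑ i, (ψ i) ^ 2)
        + (1 / 4) * Ω + (ε ^ 2 / 2) * (h * ∑ i, (At.mulVec ψ i) ^ 2))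
    -- modified energy
    (En : (Fin n → ℝ) → (Fin n → ℝ) → ℝ)
    (hEn : ∀ p u : Fin n → ℝ, En p u =
      Eh p + (1 / (4 * τ)) * (h * ∑ i, Ainv.mulVec (p - u) i * (p - u) i)
        + (1 / 2) * (h * ∑ i, ((p - u) i) ^ 2))
    -- the modified BDF2 scheme
    (hscheme1 : ∀ k, 1 ≤ k →
      (3 : ℝ) • φ (k + 1) - (4 : ℝ) • φ k + φ (k - 1) =
        (2 * τ) • (-(A.mulVec (μ (k + 1)))))
    (hscheme2 : ∀ k, 1 ≤ k →
      μ (k + 1) = (fun i => (φ (k + 1) i) ^ 3) - (2 : ℝ) • φ k + φ (k - 1)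
        + ε ^ 2 • A.mulVec (φ (k + 1)) + (σ * τ) • A.mulVec (φ (k + 1) - φ k)) :
    ∀ k, 1 ≤ k → En (φ (k + 1)) (φ k) ≤ En (φ k) (φ (k - 1)) :=
  mBDF2_energy_stability_general h τ ε σ Ω hh hτ hσ A At Ainv hAt hAtsym hAinv φ μ Eh hEh En hEn
    hscheme1 hscheme2
end
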